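/- arXiv:0712.2688 — 2 statements merged into one kernel-verified Lean document; each statement's English description precedes it below -/
import Mathlib

section
/- For every m ≥ 3, the crown graph H_m satisfies box(H_m) = ⌈m/2⌉. In particular, writing n = 2m for the number of vertices of H_m, there exist bipartite graphs on n vertices with boxicity equal to ⌈n/4⌉. -/
/-!
Lower bound: for every `j` the non-adjacent pair `(0, j)`, `(1, j)` must be separated in some
coordinate, and a coordinate can separate at most two of these pairs, because `(0, j)` is
adjacent to `(1, j')` for `j ≠ j'`. Hence `m ≤ 2 · box(H_m)`.

Upper bound: coordinate `i` is responsible for the two matching pairs `2i, 2i + 1`. In it one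
side of the bipartition is drawn as distinct points and the other as intervals containing every
point, except that the intervals of `2i` and `2i + 1` miss the points of their partners. Taking
side `0` as the point side in coordinate `0` and side `1` in the others also separates any two
vertices on the same side.
-/

/-- A `k`-box representation of `G`: assignments of axis-parallel boxes
(given by lower and upper corners) to vertices so that distinct vertices are
adjacent iff all their coordinate intervals intersect. -/
def HasBoxRep {V : Type*} (G : SimpleGraph V) (k : ℕ) : Prop :=
  ∃ a b : V → Fin k → ℝ,
    (∀ v i, a v i ≤ b v i) ∧
    ∀ u v : V, u ≠ v →
      (G.Adj u v ↔ ∀ i : Fin k, (Set.Icc (a u i) (b u i) ∩ Set.Icc (a v i) (b v i)).Nonempty)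

/-- The boxicity of `G`: the least `k` such that `G` has a `k`-box representation. -/
noncomputable def boxicity {V : Type*} (G : SimpleGraph V) : ℕ :=
  sInf {k : ℕ | HasBoxRep G k}

/-- The crown graph `H_m` (`K_{m,m}` minus a perfect matching): `(s, i)` and `(t, j)`
are adjacent iff `s ≠ t` and `i ≠ j`. -/
def crownGraph (m : ℕ) : SimpleGraph (Fin 2 × Fin m) :=
  SimpleGraph.fromRel (fun p q => p.1 ≠ q.1 ∧ p.2 ≠ q.2)

open Set

theorem Set.Icc_inter_Icc_nonempty_iff {α : Type*} [Lattice α] {a₁ b₁ a₂ b₂ : α}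
    (h₁ : a₁ ≤ b₁) (h₂ : a₂ ≤ b₂) :
    (Icc a₁ b₁ ∩ Icc a₂ b₂).Nonempty ↔ a₁ ≤ b₂ ∧ a₂ ≤ b₁ := by
  rw [Icc_inter_Icc, nonempty_Icc, sup_le_iff, le_inf_iff, le_inf_iff]
  tauto

theorem hasBoxRep_iff {V : Type*} (G : SimpleGraph V) (k : ℕ) :
    HasBoxRep G k ↔ ∃ a b : V → Fin k → ℝ, (∀ v i, a v i ≤ b v i) ∧
      ∀ u v, u ≠ v → (G.Adj u v ↔ ∀ i, a u i ≤ b v i ∧ a v i ≤ b u i) := by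
  refine exists₂_congr fun a b => and_congr_right fun hab => ?_
  simp only [Icc_inter_Icc_nonempty_iff (hab _ _) (hab _ _)]

theorem boxicity_le_of_hasBoxRep {V : Type*} {G : SimpleGraph V} {k : ℕ} (h : HasBoxRep G k) :
    boxicity G ≤ k :=
  Nat.sInf_le h

theorem hasBoxRep_boxicity_of_hasBoxRep {V : Type*} {G : SimpleGraph V} {k : ℕ}
    (h : HasBoxRep G k) : HasBoxRep G (boxicity G) :=
  Nat.sInf_mem (s := {k | HasBoxRep G k}) ⟨k, h⟩

/-- Each coordinate separates at most two of the pairs `x j, y j`: one with `x j` to the right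
of `y j` and one with `x j` to the left, since two pairs separated the same way would make
`x j, y j'` or `x j', y j` disjoint. -/
theorem HasBoxRep.card_le_two_mul {V ι : Type*} [Fintype ι] {G : SimpleGraph V} {k : ℕ}
    (hG : HasBoxRep G k) (x y : ι → V) (hne : ∀ j, x j ≠ y j)
    (hnadj : ∀ j, ¬ G.Adj (x j) (y j)) (hadj : ∀ j j', j ≠ j' → G.Adj (x j) (y j')) :
    Fintype.card ι ≤ 2 * k := by
  obtain ⟨a, b, hab, hrep⟩ := (hasBoxRep_iff G k).1 hG
  have hsep : ∀ j, ∃ i, b (y j) i < a (x j) i ∨ b (x j) i < a (y j) i := fun j => by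
    simpa only [hrep _ _ (hne j), not_forall, not_and_or, not_le] using hnadj j
  choose sep hsep using hsep
  let F : ι → Fin k × Bool := fun j => (sep j, decide (b (y j) (sep j) < a (x j) (sep j)))
  have hF : F.Injective := by
    intro j j' hjj'
    by_contra hjj
    obtain ⟨hi, hside⟩ := Prod.ext_iff.1 hjj'
    simp only [F, decide_eq_decide] at hi hside
    have overlap : ∀ {j j'}, j ≠ j' → ∀ i, a (x j) i ≤ b (y j') i ∧ a (y j') i ≤ b (x j) i :=
      fun hne' => (hrep _ _ (G.ne_of_adj (hadj _ _ hne'))).1 (hadj _ _ hne')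
    have h₁ := overlap hjj (sep j')
    have h₂ := overlap (Ne.symm hjj) (sep j')
    have hj := hsep j
    rw [hi] at hj hside
    by_cases hleft : b (y j') (sep j') < a (x j') (sep j')
    · linarith [hside.2 hleft]
    · linarith [(hsep j').resolve_left hleft, hj.resolve_left (mt hside.1 hleft)]
  simpa [mul_comm] using Fintype.card_le_of_injective F hF

@[simp]
theorem crownGraph_adj {m : ℕ} {p q : Fin 2 × Fin m} :
    (crownGraph m).Adj p q ↔ p.1 ≠ q.1 ∧ p.2 ≠ q.2 := by
  simp only [crownGraph, SimpleGraph.fromRel_adj, ne_eq, Prod.ext_iff]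
  grind

theorem le_two_mul_of_hasBoxRep_crownGraph {m k : ℕ} (h : HasBoxRep (crownGraph m) k) :
    m ≤ 2 * k := by
  simpa using h.card_le_two_mul (fun j => (0, j)) (fun j => (1, j)) (by simp) (by simp)
    (fun j j' hjj' => by simpa using hjj')

section CrownBoxes

variable {m i c d : ℕ}

/- In coordinate `i` the vertices on side `pointSide i` are points and the others intervals.
The matching pairs with `c / 2 = i` are separated by placing the points `2i` and `2i + 1` at
`-1` and `m`, just outside the shortened intervals `[0, m]` and `[-1, m - 1]` of their
partners; every other point lies in `[0, m - 1]`. -/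

def pointPos (m i c : ℕ) : ℝ := if c = 2 * i then -1 else if c = 2 * i + 1 then m else c

def ivlLo (i c : ℕ) : ℝ := if c = 2 * i then 0 else -1

def ivlHi (m i c : ℕ) : ℝ := if c = 2 * i + 1 then m - 1 else m

theorem ivlLo_le_ivlHi (hm : 1 ≤ m) : ivlLo i c ≤ ivlHi m i c := by
  have : (1 : ℝ) ≤ m := by exact_mod_cast hm
  unfold ivlLo ivlHi
  split_ifs <;> linarith

theorem pointPos_mem_ivl_iff (hc : c < m) :
    (ivlLo i d ≤ pointPos m i c ∧ pointPos m i c ≤ ivlHi m i d) ↔ ¬ (c = d ∧ c / 2 = i) := by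
  by_cases hcd : c = d ∧ c / 2 = i
  · obtain ⟨rfl, hci⟩ := hcd
    simp only [and_self, hci, not_true_eq_false, iff_false, not_and_or, not_le]
    unfold pointPos ivlLo ivlHi
    split_ifs <;> first | omega | norm_num
  · simp only [hcd, not_false_eq_true, iff_true]
    have hc' : (c : ℝ) + 1 ≤ m := by exact_mod_cast hc
    have hc0 : (0 : ℝ) ≤ c := c.cast_nonneg
    unfold pointPos ivlLo ivlHi
    split_ifs <;> first | omega | constructor <;> linarith

theorem pointPos_injOn : Set.InjOn (pointPos m i) (Set.Iio m) := by
  intro c (hc : c < m) d (hd : d < m) h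
  have hc' : (c : ℝ) + 1 ≤ m := by exact_mod_cast hc
  have hd' : (d : ℝ) + 1 ≤ m := by exact_mod_cast hd
  have hc0 : (0 : ℝ) ≤ c := c.cast_nonneg
  have hd0 : (0 : ℝ) ≤ d := d.cast_nonneg
  unfold pointPos at h
  split_ifs at h <;> first | omega | exact_mod_cast h | linarith

def pointSide (i : ℕ) : Fin 2 := if i = 0 then 0 else 1

theorem exists_pointSide_eq {k : ℕ} (hk : 2 ≤ k) (s : Fin 2) : ∃ i : Fin k, pointSide i = s := by
  fin_cases s
  · exact ⟨⟨0, by omega⟩, rfl⟩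
  · exact ⟨⟨1, by omega⟩, rfl⟩

theorem eq_pointSide_or_eq_pointSide {s t : Fin 2} (hst : s ≠ t) (i : ℕ) :
    s = pointSide i ∨ t = pointSide i := by
  unfold pointSide
  split_ifs <;> omega

def crownLo (m k : ℕ) (v : Fin 2 × Fin m) (i : Fin k) : ℝ :=
  if v.1 = pointSide i then pointPos m i v.2 else ivlLo i v.2

def crownHi (m k : ℕ) (v : Fin 2 × Fin m) (i : Fin k) : ℝ :=
  if v.1 = pointSide i then pointPos m i v.2 else ivlHi m i v.2

variable {k : ℕ}

theorem crownLo_le_crownHi (hm : 1 ≤ m) (v : Fin 2 × Fin m) (i : Fin k) :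
    crownLo m k v i ≤ crownHi m k v i := by
  unfold crownLo crownHi
  split_ifs
  · rfl
  · exact ivlLo_le_ivlHi hm

theorem crown_overlap_iff_of_ne {s t : Fin 2} (hst : s ≠ t) (c d : Fin m) (i : Fin k) :
    (crownLo m k (s, c) i ≤ crownHi m k (t, d) i ∧ crownLo m k (t, d) i ≤ crownHi m k (s, c) i)
      ↔ ¬ (c = d ∧ (c : ℕ) / 2 = i) := by
  rcases eq_pointSide_or_eq_pointSide hst i with h | h
  · have ht : t ≠ pointSide i := h ▸ hst.symm
    simp only [crownLo, crownHi, h, ht, if_true, if_false, and_comm (a := pointPos _ _ _ ≤ _),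
      pointPos_mem_ivl_iff c.isLt, Fin.ext_iff]
  · have hs : s ≠ pointSide i := h ▸ hst
    simp only [crownLo, crownHi, h, hs, if_true, if_false, pointPos_mem_ivl_iff d.isLt,
      Fin.ext_iff]
    grind

theorem crown_not_overlap_of_pointSide_eq {s : Fin 2} {c d : Fin m} (hcd : c ≠ d) {i : Fin k}
    (hi : pointSide i = s) :
    ¬ (crownLo m k (s, c) i ≤ crownHi m k (s, d) i ∧
      crownLo m k (s, d) i ≤ crownHi m k (s, c) i) := by
  simp only [crownLo, crownHi, hi, if_true]
  intro h
  exact hcd (Fin.ext (pointPos_injOn c.isLt d.isLt (le_antisymm h.1 h.2)))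

end CrownBoxes

theorem hasBoxRep_crownGraph {m : ℕ} (hm : 3 ≤ m) : HasBoxRep (crownGraph m) ((m + 1) / 2) := by
  rw [hasBoxRep_iff]
  refine ⟨crownLo m _, crownHi m _, crownLo_le_crownHi (by omega), ?_⟩
  rintro ⟨s, c⟩ ⟨t, d⟩ huv
  by_cases hst : s = t
  · subst hst
    have hcd : c ≠ d := fun h => huv (h ▸ rfl)
    obtain ⟨i, hi⟩ := exists_pointSide_eq (k := (m + 1) / 2) (by omega) s
    simp only [crownGraph_adj, ne_eq, not_true_eq_false, false_and, false_iff, not_forall]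
    exact ⟨i, crown_not_overlap_of_pointSide_eq hcd hi⟩
  · simp only [crownGraph_adj, crown_overlap_iff_of_ne hst]
    refine ⟨fun h i hcd => h.2 hcd.1, fun h => ⟨hst, fun hcd => h ⟨c / 2, by omega⟩ ⟨hcd, rfl⟩⟩⟩

/-- For `m ≥ 3`, the crown graph `H_m` has boxicity exactly `⌈m/2⌉`.  In particular,
`H_m` is a bipartite graph on `n = 2m` vertices with boxicity `⌈n/4⌉`. -/
theorem boxicity_crownGraph (m : ℕ) (hm : 3 ≤ m) :
    boxicity (crownGraph m) = (m + 1) / 2 ∧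
    Fintype.card (Fin 2 × Fin m) = 2 * m ∧
    boxicity (crownGraph m) = (2 * m + 3) / 4 := by
  have hrep := hasBoxRep_crownGraph hm
  have hle : boxicity (crownGraph m) ≤ (m + 1) / 2 := boxicity_le_of_hasBoxRep hrep
  have hge : m ≤ 2 * boxicity (crownGraph m) :=
    le_two_mul_of_hasBoxRep_crownGraph (hasBoxRep_boxicity_of_hasBoxRep hrep)
  have hbox : boxicity (crownGraph m) = (m + 1) / 2 := by omega
  exact ⟨hbox, by simp [mul_comm], by omega⟩
end

section
/- For every finite simple graph G on n vertices, box(G) ≤ ⌊n/2⌋. -/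
/-!
Induction on the number of vertices, removing two at a time. A complete graph has boxicity `0`.
Otherwise pick non-adjacent `u ≠ v`. Then `G = G₁ ⊓ G₂`, where `G₁` is `G` with `u` and `v` made
adjacent to every vertex, and `G₂` is `G` with the vertices other than `u` and `v` made pairwise
adjacent. Adding universal vertices does not increase the boxicity, so `box G₁ ≤ box (G - u - v)`.
`G₂` is an interval graph, and boxicity is subadditive under `⊓`, so
`box G ≤ box (G - u - v) + 1`.
-/

open Set SimpleGraph

lemma Set.Icc_inter_Icc_nonempty_iff_s13 {α : Type*} [LinearOrder α] {a b c d : α} (hab : a ≤ b)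
    (hcd : c ≤ d) : (Icc a b ∩ Icc c d).Nonempty ↔ a ≤ d ∧ c ≤ b := by
  rw [Icc_inter_Icc, nonempty_Icc, sup_le_iff, le_inf_iff, le_inf_iff]
  tauto

lemma StrictMono.Icc_inter_Icc_nonempty_iff_s13 {α β : Type*} [LinearOrder α] [LinearOrder β]
    {f : α → β} (hf : StrictMono f) (a b c d : α) :
    (Icc (f a) (f b) ∩ Icc (f c) (f d)).Nonempty ↔ (Icc a b ∩ Icc c d).Nonempty := by
  rw [Icc_inter_Icc, Icc_inter_Icc, nonempty_Icc, nonempty_Icc, ← hf.monotone.map_max,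
    ← hf.monotone.map_min, hf.le_iff_le]

section

variable {V : Type*} {G : SimpleGraph V} {k : ℕ}

lemma hasBoxRep_top (k : ℕ) : HasBoxRep (⊤ : SimpleGraph V) k :=
  ⟨fun _ _ => 0, fun _ _ => 0, fun _ _ => le_rfl, fun _ _ huv =>
    iff_of_true huv fun _ => ⟨0, by simp⟩⟩

lemma HasBoxRep.inf {G₁ G₂ : SimpleGraph V} {k₁ k₂ : ℕ} (h₁ : HasBoxRep G₁ k₁)
    (h₂ : HasBoxRep G₂ k₂) : HasBoxRep (G₁ ⊓ G₂) (k₁ + k₂) := by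
  obtain ⟨a₁, b₁, hab₁, hadj₁⟩ := h₁
  obtain ⟨a₂, b₂, hab₂, hadj₂⟩ := h₂
  refine ⟨fun v => Fin.append (a₁ v) (a₂ v), fun v => Fin.append (b₁ v) (b₂ v), fun v => ?_,
    fun u v huv => ?_⟩
  · simpa [Fin.forall_fin_add] using ⟨hab₁ v, hab₂ v⟩
  · simp [Fin.forall_fin_add, hadj₁ u v huv, hadj₂ u v huv]

/-- `arctan` squeezes the boxes of the vertices outside `s` into `(-π/2, π/2)ᵏ`, and the
vertices of `s` get the cube `[-π/2, π/2]ᵏ`. -/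
lemma hasBoxRep_of_induce_compl {s : Set V} (hs : ∀ x ∈ s, ∀ y, x ≠ y → G.Adj x y)
    (h : HasBoxRep (G.induce sᶜ) k) : HasBoxRep G k := by
  classical
  obtain ⟨a, b, hab, hadj⟩ := h
  let A : V → Fin k → ℝ := fun x i =>
    if hx : x ∈ sᶜ then Real.arctan (a ⟨x, hx⟩ i) else -(Real.pi / 2)
  let B : V → Fin k → ℝ := fun x i =>
    if hx : x ∈ sᶜ then Real.arctan (b ⟨x, hx⟩ i) else Real.pi / 2
  have hA : ∀ x i, -(Real.pi / 2) ≤ A x i := fun x i => by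
    unfold A; split_ifs
    exacts [(Real.neg_pi_div_two_lt_arctan _).le, le_rfl]
  have hB : ∀ x i, B x i ≤ Real.pi / 2 := fun x i => by
    unfold B; split_ifs
    exacts [(Real.arctan_lt_pi_div_two _).le, le_rfl]
  have hAB : ∀ x i, A x i ≤ B x i := fun x i => by
    unfold A B; split_ifs
    exacts [Real.arctan_strictMono.monotone (hab _ i), by linarith [Real.pi_pos]]
  have hcube : ∀ x ∈ s, ∀ y i, (Icc (A x i) (B x i) ∩ Icc (A y i) (B y i)).Nonempty := by
    intro x hx y i
    have hAx : A x i = -(Real.pi / 2) := dif_neg (not_not.2 hx)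
    have hBx : B x i = Real.pi / 2 := dif_neg (not_not.2 hx)
    rw [Set.Icc_inter_Icc_nonempty_iff_s13 (hAB _ _) (hAB _ _), hAx, hBx]
    exact ⟨(hA y i).trans (hAB y i), (hAB y i).trans (hB y i)⟩
  refine ⟨A, B, hAB, fun x y hxy => ?_⟩
  by_cases hx : x ∈ s
  · exact iff_of_true (hs x hx y hxy) (hcube x hx y)
  by_cases hy : y ∈ s
  · exact iff_of_true (hs y hy x hxy.symm).symm fun i => inter_comm _ _ ▸ hcube y hy x i
  simp only [A, B, dif_pos (show x ∈ sᶜ from hx), dif_pos (show y ∈ sᶜ from hy),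
    Real.arctan_strictMono.Icc_inter_Icc_nonempty_iff_s13]
  exact hadj ⟨x, hx⟩ ⟨y, hy⟩ (by simpa using hxy)

lemma hasBoxRep_one_of_not_adj {u v : V} (huv : u ≠ v) (hnadj : ¬G.Adj u v)
    (hrest : ∀ x y, x ≠ y → x ∉ ({u, v} : Set V) → y ∉ ({u, v} : Set V) → G.Adj x y) :
    HasBoxRep G 1 := by
  classical
  -- every vertex other than `u` and `v` gets an interval containing `[1, 2]`
  let lo : V → ℝ := fun x =>
    if x = u then 0 else if x = v then 3 else if G.Adj u x then 0 else 1
  let hi : V → ℝ := fun x =>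
    if x = u then 0 else if x = v then 3 else if G.Adj v x then 3 else 2
  have hlohi : ∀ x, lo x ≤ hi x := fun x => by
    unfold lo hi; split_ifs <;> norm_num
  refine ⟨fun x _ => lo x, fun x _ => hi x, fun x _ => hlohi x, fun x y hxy => ?_⟩
  simp only [Unique.forall_iff, Set.Icc_inter_Icc_nonempty_iff_s13 (hlohi _) (hlohi _)]
  have hxy_rest := hrest x y hxy
  simp only [Set.mem_insert_iff, Set.mem_singleton_iff] at hxy_rest
  unfold lo hi
  split_ifs <;> subst_vars <;> simp_all [G.adj_comm] <;> norm_num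

lemma hasBoxRep_succ_of_not_adj {u v : V} (huv : u ≠ v) (hnadj : ¬G.Adj u v)
    (h : HasBoxRep (G.induce ({u, v} : Set V)ᶜ) k) : HasBoxRep G (k + 1) := by
  set s : Set V := {u, v}
  let G₁ := G ⊔ fromRel fun x _ => x ∈ s
  let G₂ := G ⊔ fromRel fun x y => x ∉ s ∧ y ∉ s
  have h₁ : HasBoxRep G₁ k := by
    refine hasBoxRep_of_induce_compl (s := s) (fun x hx y hxy => Or.inr ⟨hxy, Or.inl hx⟩) ?_
    convert h using 1
    ext ⟨x, hx⟩ ⟨y, hy⟩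
    simp [G₁, show x ∉ s from hx, show y ∉ s from hy]
  have h₂ : HasBoxRep G₂ 1 :=
    hasBoxRep_one_of_not_adj huv (by simp [G₂, hnadj, s])
      fun x y hxy hx hy => Or.inr ⟨hxy, Or.inl ⟨hx, hy⟩⟩
  have hG : G₁ ⊓ G₂ = G := by
    rw [← sup_inf_left, sup_eq_left]
    intro x y
    simp only [inf_adj, fromRel_adj]
    tauto
  exact hG ▸ h₁.inf h₂

lemma hasBoxRep_card_div_two [Fintype V] (G : SimpleGraph V) :
    HasBoxRep G (Fintype.card V / 2) := by
  classical
  induction hn : Fintype.card V using Nat.strong_induction_on generalizing V with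
  | _ n ih =>
  obtain rfl | hne := eq_or_ne G ⊤
  · exact hasBoxRep_top _
  obtain ⟨u, v, huv, hnadj⟩ := ne_top_iff_exists_not_adj.1 hne
  have hpair : Fintype.card ({u, v} : Set V) = 2 := by
    simp [Finset.card_pair huv]
  have hcompl : Fintype.card ↥({u, v} : Set V)ᶜ = n - 2 := by
    rw [Fintype.card_compl_set, hpair, hn]
  have h2n : 2 ≤ n := hn ▸ hpair ▸ Fintype.card_subtype_le _
  have := hasBoxRep_succ_of_not_adj huv hnadj (ih (n - 2) (by omega) _ hcompl)
  rwa [show (n - 2) / 2 + 1 = n / 2 by omega] at this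

end

/-- Every graph on `n` vertices has boxicity at most `⌊n/2⌋`. -/
theorem boxicity_le_half {V : Type*} [Fintype V] (G : SimpleGraph V) :
    boxicity G ≤ Fintype.card V / 2 :=
  Nat.sInf_le (hasBoxRep_card_div_two G)
end
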